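/- arXiv:1203.4647 — 5 statements merged into one kernel-verified Lean document; each statement's English description precedes it below -/
import Mathlib

section
/- For every integer k ≥ 1, the determinant of the k×k matrix whose (i,j) entry (1 ≤ i,j ≤ k) is the binomial coefficient C(2k − i, 2j − 2) equals (−2)^{k(k−1)/2}. -/
/-!
Read `C(2k - 1 - i, 2j)` as the coefficient of `x ^ 2j` in `(1 + x) ^ (k - 1 - i) * (1 + x) ^ k`.
Expanding `(1 + x) ^ (k - 1 - i)` in powers of `x` factors the matrix as a row-reversed Pascal
matrix, of determinant `(-1) ^ (k(k-1)/2)`, times the matrix `B` whose row `m` lists the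
even-index coefficients of `x ^ m * (1 + x) ^ k`.

To compute `det B`, change the basis `x ^ m` to `(1 - x) ^ m` on both sides; the transition
matrix `L` has determinant `±1`. Since
`(1 - x) ^ a * (1 + x) ^ k = (1 - x²) ^ a * (1 + x) ^ (k - a)`, row `a` of `L * B` lists the
coefficients of `(1 - y) ^ a * E (k - a)`, where `E n = ∑ₜ C(n, 2t) yᵗ` is the even part of
`(1 + x) ^ n`. Substituting `y ↦ 1 - y`, row `a` of `L * B * L` becomes
`y ^ a * E (k - a) (1 - y)`: an upper triangular matrix with diagonal
`E (k - a) (1) = 2 ^ (k - a - 1)`.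
-/

open Polynomial Matrix Finset

theorem Fin.sum_univ_val (n : ℕ) : ∑ i : Fin n, (i : ℕ) = n * (n - 1) / 2 := by
  rw [Fin.sum_univ_eq_sum_range (fun i => i), sum_range_id]

theorem Fin.sign_revPerm (n : ℕ) :
    Equiv.Perm.sign (Fin.revPerm : Equiv.Perm (Fin n)) = (-1) ^ (n * (n - 1) / 2) := by
  have hinv :
      ∀ j : Fin n, ∀ i ∈ Iio j, (if revPerm i < revPerm j then 1 else -1 : ℤˣ) = -1 :=
    fun j i hi => if_neg (by simpa using (mem_Iio.mp hi).le)
  rw [Equiv.Perm.sign_eq_prod_prod_Iio, prod_congr rfl fun j _ => prod_congr rfl (hinv j)]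
  simp only [Finset.prod_const, card_Iio]
  rw [prod_pow_eq_pow_sum, sum_univ_val]

namespace Polynomial

section CommSemiring

variable {R : Type*} [CommSemiring R] {k : ℕ}

theorem natDegree_one_add_X_pow_le (n : ℕ) : ((1 + X : R[X]) ^ n).natDegree ≤ n := by
  compute_degree

theorem natDegree_contract_le {n : ℕ} (hn : n ≠ 0) (f : R[X]) :
    (contract n f).natDegree ≤ f.natDegree / n := by
  refine natDegree_le_iff_coeff_eq_zero.mpr fun d hd => ?_
  rw [coeff_contract hn]
  exact coeff_eq_zero_of_natDegree_lt ((Nat.div_lt_iff_lt_mul (Nat.pos_of_ne_zero hn)).mp hd)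

theorem contract_monomial {n : ℕ} (hn : n ≠ 0) (m : ℕ) (c : R) :
    contract n (monomial m c) = if n ∣ m then monomial (m / n) c else 0 := by
  ext d
  rw [coeff_contract hn, coeff_monomial]
  by_cases h : n ∣ m
  · obtain ⟨t, rfl⟩ := h
    simp [coeff_monomial, hn, mul_comm, eq_comm]
  · simp only [h, if_false, coeff_zero]
    exact if_neg fun h' => h ⟨d, h'.trans (mul_comm _ _)⟩

-- Each coefficient of `g` enters exactly one even-index coefficient of `(1 + X) * g`.
theorem eval_one_contract_two_one_add_X_mul (g : R[X]) :
    (contract 2 ((1 + X) * g)).eval 1 = g.eval 1 := by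
  induction g using Polynomial.induction_on' with
  | add f g hf hg => rw [mul_add, contract_add two_ne_zero, eval_add, hf, hg, eval_add]
  | monomial m c =>
    rw [add_mul, one_mul, X_mul_monomial, contract_add two_ne_zero, contract_monomial two_ne_zero,
      contract_monomial two_ne_zero]
    rcases Nat.even_or_odd m with ⟨t, rfl⟩ | ⟨t, rfl⟩
    · simp [← two_mul, Nat.not_two_dvd_bit1]
    · simp [show 2 * t + 1 + 1 = 2 * (t + 1) by ring, Nat.not_two_dvd_bit1]

theorem eval_one_contract_two_one_add_X_pow (n : ℕ) :
    (contract 2 ((1 + X : R[X]) ^ (n + 1))).eval 1 = 2 ^ n := by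
  rw [pow_succ', eval_one_contract_two_one_add_X_mul]
  simp [one_add_one_eq_two]

def coeffMatrix (p : Fin k → R[X]) (e : Fin k → ℕ) : Matrix (Fin k) (Fin k) R :=
  of fun i j => (p i).coeff (e j)

theorem coeffMatrix_mul_coeffMatrix_X_pow_mul {p : Fin k → R[X]}
    (hp : ∀ i, (p i).natDegree < k) (q : R[X]) (e : Fin k → ℕ) :
    coeffMatrix p (↑) * coeffMatrix (fun m => X ^ (m : ℕ) * q) e
      = coeffMatrix (fun i => p i * q) e := by
  ext i j
  simp only [coeffMatrix, mul_apply, of_apply]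
  conv_rhs => rw [as_sum_range_C_mul_X_pow' (p i) (hp i)]
  simp only [Finset.sum_mul, finsetSum_coeff, mul_assoc, coeff_C_mul]
  exact Fin.sum_univ_eq_sum_range (fun m => (p i).coeff m * (X ^ m * q).coeff (e j)) k

theorem coeffMatrix_mul_coeffMatrix_pow {p : Fin k → R[X]}
    (hp : ∀ i, (p i).natDegree < k) (q : R[X]) (e : Fin k → ℕ) :
    coeffMatrix p (↑) * coeffMatrix (fun m => q ^ (m : ℕ)) e
      = coeffMatrix (fun i => (p i).comp q) e := by
  ext i j
  simp only [coeffMatrix, mul_apply, of_apply, comp, eval₂_eq_sum_range' C (hp i),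
    finsetSum_coeff, coeff_C_mul]
  exact Fin.sum_univ_eq_sum_range (fun m => (p i).coeff m * (q ^ m).coeff (e j)) k

theorem coeffMatrix_contract {n : ℕ} (hn : n ≠ 0) (p : Fin k → R[X]) :
    coeffMatrix p (· * n) = coeffMatrix (fun i => contract n (p i)) (↑) := by
  ext i j
  simp [coeffMatrix, coeff_contract hn]

end CommSemiring

section CommRing

variable {R : Type*} [CommRing R] {k : ℕ}

theorem natDegree_one_sub_X_pow_le (n : ℕ) : ((1 - X : R[X]) ^ n).natDegree ≤ n := by
  compute_degree

theorem contract_two_one_sub_X_pow_mul_one_add_X_pow {a n : ℕ} (h : a ≤ n) :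
    contract 2 ((1 - X : R[X]) ^ a * (1 + X) ^ n)
      = (1 - X) ^ a * contract 2 ((1 + X) ^ (n - a)) := by
  obtain ⟨c, rfl⟩ := Nat.exists_eq_add_of_le h
  have hexpand : expand R 2 ((1 - X) ^ a) = (1 - X) ^ a * (1 + X) ^ a := by
    rw [map_pow, ← mul_pow, map_sub, map_one, expand_X]
    ring
  rw [Nat.add_sub_cancel_left, mul_comm _ (contract 2 _), ← contract_mul_expand two_ne_zero,
    hexpand]
  congr 1
  ring

theorem det_coeffMatrix_of_natDegree_le {p : Fin k → R[X]}
    (hp : ∀ i : Fin k, (p i).natDegree ≤ i) :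
    (coeffMatrix p (↑)).det = ∏ i, (p i).coeff i :=
  det_of_isLowerTriangular _ fun i _ hij =>
    coeff_eq_zero_of_natDegree_lt ((hp i).trans_lt hij)

theorem det_coeffMatrix_of_X_pow_dvd {p : Fin k → R[X]}
    (hp : ∀ i : Fin k, X ^ (i : ℕ) ∣ p i) :
    (coeffMatrix p (↑)).det = ∏ i, (p i).coeff i :=
  det_of_isUpperTriangular fun i j hij => X_pow_dvd_iff.mp (hp i) j hij

theorem det_coeffMatrix_one_add_X_pow_rev :
    (coeffMatrix (fun i : Fin k => (1 + X : R[X]) ^ (i.rev : ℕ)) (↑)).det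
      = (-1) ^ (k * (k - 1) / 2) := by
  have hpascal : (coeffMatrix (fun i : Fin k => (1 + X : R[X]) ^ (i : ℕ)) (↑)).det = 1 := by
    rw [det_coeffMatrix_of_natDegree_le fun i => natDegree_one_add_X_pow_le _]
    exact prod_eq_one fun i _ => by simp [coeff_one_add_X_pow]
  calc _ = ((coeffMatrix (fun i : Fin k => (1 + X : R[X]) ^ (i : ℕ)) (↑)).submatrix
        Fin.revPerm id).det := rfl
    _ = _ := by rw [det_permute, hpascal, Fin.sign_revPerm]; simp

theorem det_coeffMatrix_one_sub_X_pow :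
    (coeffMatrix (fun i : Fin k => (1 - X : R[X]) ^ (i : ℕ)) (↑)).det
      = (-1) ^ (k * (k - 1) / 2) := by
  rw [det_coeffMatrix_of_natDegree_le fun i => natDegree_one_sub_X_pow_le _]
  have hdiag (i : ℕ) : ((1 - X : R[X]) ^ i).coeff i = (-1) ^ i := by
    have h := coeff_pow_of_natDegree_le (m := i) (n := 1) (p := (1 - X : R[X]))
      (by compute_degree)
    rw [mul_one] at h
    rw [h, coeff_sub, coeff_one, coeff_X_one]
    simp
  simp only [hdiag, prod_pow_eq_pow_sum, Fin.sum_univ_val]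

theorem det_coeffMatrix_X_pow_mul_one_add_X_pow :
    (coeffMatrix (fun m : Fin k => X ^ (m : ℕ) * (1 + X : R[X]) ^ k) (· * 2)).det
      = 2 ^ (k * (k - 1) / 2) := by
  set B := coeffMatrix (fun m : Fin k => X ^ (m : ℕ) * (1 + X : R[X]) ^ k) (· * 2)
  set L := coeffMatrix (fun a : Fin k => (1 - X : R[X]) ^ (a : ℕ)) (↑)
  set E : ℕ → R[X] := fun n => contract 2 ((1 + X) ^ n)
  have hLB : L * B = coeffMatrix (fun a : Fin k => (1 - X) ^ (a : ℕ) * E (k - a)) (↑) := by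
    rw [coeffMatrix_mul_coeffMatrix_X_pow_mul, coeffMatrix_contract two_ne_zero]
    · simp_rw [contract_two_one_sub_X_pow_mul_one_add_X_pow Fin.is_le', E]
    · exact fun a => (natDegree_one_sub_X_pow_le _).trans_lt a.is_lt
  have hLBL : L * B * L
      = coeffMatrix (fun a : Fin k => X ^ (a : ℕ) * (E (k - a)).comp (1 - X)) (↑) := by
    rw [hLB, coeffMatrix_mul_coeffMatrix_pow]
    · simp only [mul_comp, pow_comp, sub_comp, one_comp, X_comp, sub_sub_cancel]
    · intro a
      calc _ ≤ (a : ℕ) + (k - a) / 2 := natDegree_mul_le.trans <| add_le_add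
            (natDegree_one_sub_X_pow_le _) <| (natDegree_contract_le two_ne_zero _).trans
              (Nat.div_le_div_right (natDegree_one_add_X_pow_le _))
        _ < k := by omega
  have hdiag (a : Fin k) :
      (X ^ (a : ℕ) * (E (k - a)).comp (1 - X)).coeff a = 2 ^ (a.rev : ℕ) := by
    rw [coeff_X_pow_mul', if_pos le_rfl, Nat.sub_self, coeff_zero_eq_eval_zero, eval_comp,
      show k - a = a.rev + 1 by rw [Fin.val_rev]; omega]
    simpa using eval_one_contract_two_one_add_X_pow (R := R) a.rev
  have hL : L.det * L.det = 1 := by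
    rw [det_coeffMatrix_one_sub_X_pow, ← mul_pow]
    simp
  calc B.det = L.det * L.det * B.det := by rw [hL, one_mul]
    _ = (L * B * L).det := by rw [det_mul, det_mul]; ring
    _ = 2 ^ (k * (k - 1) / 2) := by
      rw [hLBL, det_coeffMatrix_of_X_pow_dvd fun a => dvd_mul_right _ _,
        prod_congr rfl fun a _ => hdiag a, prod_pow_eq_pow_sum, ← Fin.sum_univ_val]
      exact congrArg _ (Equiv.sum_comp Fin.revPerm (fun i => (i : ℕ)))

end CommRing

end Polynomial

theorem determinant_binomial_column_reversed_general (k : ℕ) :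
    Matrix.det (Matrix.of fun i j : Fin k =>
      ((2 * k - ((i : ℕ) + 1)).choose (2 * (j : ℕ)) : ℚ))
    = (-2) ^ (k * (k - 1) / 2) := by
  have hfactor :
      (Matrix.of fun i j : Fin k => ((2 * k - ((i : ℕ) + 1)).choose (2 * (j : ℕ)) : ℚ))
        = coeffMatrix (fun i : Fin k => (1 + X : ℚ[X]) ^ (i.rev : ℕ)) (↑)
          * coeffMatrix (fun m : Fin k => X ^ (m : ℕ) * (1 + X) ^ k) (· * 2) := by
    rw [coeffMatrix_mul_coeffMatrix_X_pow_mul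
      fun i => (natDegree_one_add_X_pow_le _).trans_lt i.rev.is_lt]
    ext i j
    simp only [coeffMatrix, of_apply, ← pow_add, coeff_one_add_X_pow, Fin.val_rev]
    congr 2 <;> omega
  rw [hfactor, det_mul, det_coeffMatrix_one_add_X_pow_rev, det_coeffMatrix_X_pow_mul_one_add_X_pow,
    ← mul_pow]
  norm_num

/-- For every integer `k ≥ 1`, the determinant of the `k × k` matrix whose
`(i,j)` entry (with `1 ≤ i, j ≤ k`) is the binomial coefficient `C(2k − i, 2j − 2)`
equals `(−2)^(k(k−1)/2)`.  Rows and columns are indexed by `Fin k`, so the `1`-indexed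
indices `i, j` correspond to `(i : Fin k) + 1` and `(j : Fin k) + 1`. -/
theorem determinant_binomial_column_reversed (k : ℕ) (hk : 1 ≤ k) :
    Matrix.det (Matrix.of fun i j : Fin k =>
      ((2 * k - ((i : ℕ) + 1)).choose (2 * (j : ℕ)) : ℚ))
    = (-2) ^ (k * (k - 1) / 2) :=
  determinant_binomial_column_reversed_general k
end

section
/- For every integer k ≥ 1, ∑_{σ,τ ∈ S_k} sgn(σ) sgn(τ) ∏_{i=1}^k 1/(2k + 2 − σ(i) − 2τ(i))! = (−1)^{k(k−1)/2} · 2^{k(k−1)/2} · k! · ∏_{j=0}^{k−1} (2j)!/(k+j)!, where by convention 1/n! = 0 when n < 0. Equivalently, the coefficient of z₁^{2k−1} z₂^{2k−1} ⋯ z_k^{2k−1} in the formal power series Δ(z₁,…,z_k) · Δ(z₁²,…,z_k²) · exp(z₁ + ⋯ + z_k) over ℚ equals (−1)^{k(k−1)/2} 2^{k(k−1)/2} k! ∏_{j=0}^{k−1} (2j)!/(k+j)!. -/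
open scoped BigOperators

/-- `factInv n = 1/n!` for `n ≥ 0`, and `0` for `n < 0`. -/
def factInv (n : ℤ) : ℚ :=
  if 0 ≤ n then 1 / (n.toNat.factorial : ℚ) else 0

/-!
Summing over `τ` first, the double sum is `k! · det A` with `A r c = 1/(2k-1-r-2c)!`.
Multiplying column `c` by `N_c! = (2k-1-2c)!` turns its entries into the falling factorials
`N_c (N_c - 1) ⋯ (N_c - r + 1)`; these are monic polynomials of degree `r` in `N_c`, so the
determinant is the Vandermonde determinant of the progression `N_c = 2k-1-2c`, namely
`(-2)^(k choose 2) ∏_{x<k} x!`. The factorials are then matched through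
`∏_{x<2k} x! = ∏_{x<k} x! · ∏_{j<k} (k+j)! = ∏_{j<k} (2j)! · ∏_{j<k} (2j+1)!`.
-/

open Finset Matrix Polynomial Equiv Equiv.Perm Nat

theorem Matrix.sum_sign_mul_sign_mul_prod_eq_factorial_mul_det {n R : Type*} [Fintype n]
    [DecidableEq n] [CommRing R] (A : Matrix n n R) :
    ∑ σ : Perm n, ∑ τ : Perm n, ((sign σ : ℤ) : R) * ((sign τ : ℤ) : R) * ∏ i, A (σ i) (τ i)
      = (Fintype.card n)! * A.det := by
  have sum_fixed_τ (τ : Perm n) :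
      ∑ σ : Perm n, ((sign σ : ℤ) : R) * ((sign τ : ℤ) : R) * ∏ i, A (σ i) (τ i) = A.det := by
    have h := det_permute' τ A
    rw [det_apply'] at h
    calc _ = ((sign τ : ℤ) : R) * ∑ σ : Perm n, ((sign σ : ℤ) : R) * ∏ i, A (σ i) (τ i) := by
          rw [mul_sum]
          exact sum_congr rfl fun σ _ => by ring
      _ = ((sign τ : ℤ) : R) * ((sign τ : ℤ) : R) * A.det := by
          rw [mul_assoc, ← h]
          rfl
      _ = A.det := by
          rw [← Int.cast_mul, ← Units.val_mul, Int.units_mul_self, Units.val_one, Int.cast_one,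
            one_mul]
  rw [sum_comm, sum_congr rfl fun τ _ => sum_fixed_τ τ, sum_const, Finset.card_univ,
    Fintype.card_perm, nsmul_eq_mul]

theorem factorial_mul_factInv_sub (N j : ℕ) :
    (N ! : ℚ) * factInv ((N : ℤ) - j) = N.descFactorial j := by
  rcases le_or_gt j N with hj | hj
  · have hcast : (N : ℤ) - j = ((N - j : ℕ) : ℤ) := by omega
    rw [hcast, factInv, if_pos (Int.natCast_nonneg _), Int.toNat_natCast,
      ← Nat.factorial_mul_descFactorial hj]
    have : ((N - j)! : ℚ) ≠ 0 := by positivity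
    push_cast
    field_simp
  · rw [factInv, if_neg (by omega), Nat.descFactorial_eq_zero_iff_lt.2 hj]
    simp

theorem det_factInv_sub_mul_prod_factorial {k : ℕ} (N : Fin k → ℕ) :
    (of fun i j : Fin k => factInv ((N i : ℤ) - j)).det * ∏ i, ((N i)! : ℚ)
      = (vandermonde fun i => (N i : ℚ)).det := by
  rw [det_eval_matrixOfPolynomials_eq_det_vandermonde _ (fun j => descPochhammer ℚ j)
    (fun j => descPochhammer_natDegree ℚ j) (fun j => monic_descPochhammer ℚ j),
    mul_comm, ← det_diagonal, ← det_mul]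
  congr 1
  ext i j
  simp [diagonal_mul, factorial_mul_factInv_sub, descPochhammer_eval_eq_descFactorial]

theorem Fin.sum_card_Ioi (n : ℕ) : ∑ i : Fin n, #(Ioi i) = n.choose 2 := by
  rw [sum_congr rfl fun i _ => Fin.card_Ioi i, Fin.sum_univ_eq_sum_range (fun i => n - 1 - i),
    sum_range_reflect (fun i => i) n, sum_range_id, choose_two_right]

theorem Matrix.det_vandermonde_const_mul {R : Type*} [CommRing R] {n : ℕ} (c : R)
    (v : Fin n → R) :
    (vandermonde fun i => c * v i).det = c ^ n.choose 2 * (vandermonde v).det := by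
  rw [det_vandermonde, det_vandermonde, ← Fin.sum_card_Ioi, ← prod_pow_eq_pow_sum,
    ← prod_mul_distrib]
  refine prod_congr rfl fun i _ => ?_
  rw [← prod_const, ← prod_mul_distrib]
  exact prod_congr rfl fun j _ => by ring

theorem Matrix.det_vandermonde_id_eq_prod_factorial {R : Type*} [CommRing R] (n : ℕ) :
    (vandermonde fun i : Fin n => (i : R)).det = ∏ x ∈ range n, (x ! : R) := by
  cases n with
  | zero => simp
  | succ m =>
    rw [det_vandermonde_id_eq_superFactorial, ← prod_range_succ_factorial]
    push_cast
    rfl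

theorem Matrix.det_vandermonde_affine {R : Type*} [CommRing R] (n : ℕ) (a b : R) :
    (vandermonde fun i : Fin n => a * i + b).det
      = a ^ n.choose 2 * ∏ x ∈ range n, (x ! : R) := by
  rw [det_vandermonde_add _ b, det_vandermonde_const_mul, det_vandermonde_id_eq_prod_factorial]

theorem Finset.prod_range_two_mul {M : Type*} [CommMonoid M] (f : ℕ → M) (n : ℕ) :
    ∏ x ∈ range (2 * n), f x = (∏ j ∈ range n, f (2 * j)) * ∏ j ∈ range n, f (2 * j + 1) := by
  induction n with
  | zero => simp
  | succ n ih =>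
    rw [show 2 * (n + 1) = 2 * n + 1 + 1 by ring, prod_range_succ, prod_range_succ, ih,
      prod_range_succ, prod_range_succ, mul_assoc, mul_mul_mul_comm]

theorem prod_range_factorial_mul_prod_range_factorial_add (k : ℕ) :
    (∏ x ∈ range k, x !) * ∏ j ∈ range k, (k + j)!
      = (∏ j ∈ range k, (2 * j)!) * ∏ j ∈ range k, (2 * j + 1)! := by
  rw [← prod_range_add, ← two_mul, prod_range_two_mul]

theorem prod_factorial_two_mul_sub_one_sub (k : ℕ) :
    ∏ c : Fin k, (2 * k - 1 - 2 * c)! = ∏ j ∈ range k, (2 * j + 1)! := by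
  rw [Fin.prod_univ_eq_prod_range (fun c => (2 * k - 1 - 2 * c)!), ← prod_range_reflect]
  refine prod_congr rfl fun j hj => ?_
  rw [mem_range] at hj
  congr 1
  omega

theorem det_factInv_two_mul_sub (k : ℕ) :
    (of fun r c : Fin k => factInv (2 * (k : ℤ) - 1 - (r : ℕ) - 2 * (c : ℕ))).det
      = (-2) ^ k.choose 2 * ∏ j ∈ range k, ((2 * j)! : ℚ) / (k + j)! := by
  set N : Fin k → ℕ := fun c => 2 * k - 1 - 2 * c
  have hN (c : Fin k) : ((N c : ℕ) : ℤ) = 2 * k - 1 - 2 * c := by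
    have := c.isLt
    simp only [N]
    omega
  have h_transpose : (of fun r c : Fin k => factInv (2 * (k : ℤ) - 1 - (r : ℕ) - 2 * (c : ℕ)))
      = (of fun i j : Fin k => factInv ((N i : ℤ) - j))ᵀ := by
    ext r c
    simp only [of_apply, transpose_apply, hN]
    ring_nf
  have h_vandermonde : (vandermonde fun c => (N c : ℚ))
      = vandermonde fun c : Fin k => -2 * (c : ℚ) + (2 * k - 1) := by
    congr
    funext c
    rw [← Int.cast_natCast, hN]
    push_cast
    ring
  have h_prod_N : ∏ c, ((N c)! : ℚ) = ∏ j ∈ range k, ((2 * j + 1)! : ℚ) := by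
    exact_mod_cast prod_factorial_two_mul_sub_one_sub k
  have h := det_factInv_sub_mul_prod_factorial N
  rw [h_vandermonde, det_vandermonde_affine, h_prod_N] at h
  have h_fact : (∏ x ∈ range k, (x ! : ℚ)) * ∏ j ∈ range k, ((k + j)! : ℚ)
      = (∏ j ∈ range k, ((2 * j)! : ℚ)) * ∏ j ∈ range k, ((2 * j + 1)! : ℚ) := by
    exact_mod_cast prod_range_factorial_mul_prod_range_factorial_add k
  have h_odd : ∏ j ∈ range k, ((2 * j + 1)! : ℚ) ≠ 0 := by positivity
  have h_shift : ∏ j ∈ range k, ((k + j)! : ℚ) ≠ 0 := by positivity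
  rw [h_transpose, det_transpose, prod_div_distrib, ← mul_div_assoc, eq_div_iff h_shift]
  apply mul_right_cancel₀ h_odd
  linear_combination (∏ j ∈ range k, ((k + j)! : ℚ)) * h + (-2 : ℚ) ^ k.choose 2 * h_fact

theorem double_permutation_sum_factorials_general (k : ℕ) :
    ∑ σ : Equiv.Perm (Fin k), ∑ τ : Equiv.Perm (Fin k),
      ((Equiv.Perm.sign σ : ℤ) : ℚ) * ((Equiv.Perm.sign τ : ℤ) : ℚ) *
        ∏ i : Fin k,
          factInv (2 * (k : ℤ) - 1 - ((σ i : ℕ) : ℤ) - 2 * ((τ i : ℕ) : ℤ))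
    = (-1) ^ (k * (k - 1) / 2) * 2 ^ (k * (k - 1) / 2) * (k.factorial : ℚ) *
        ∏ j ∈ Finset.range k, ((2 * j).factorial : ℚ) / ((k + j).factorial : ℚ) := by
  refine (sum_sign_mul_sign_mul_prod_eq_factorial_mul_det
    (of fun r c : Fin k => factInv (2 * (k : ℤ) - 1 - (r : ℕ) - 2 * (c : ℕ)))).trans ?_
  rw [det_factInv_two_mul_sub, Fintype.card_fin, ← choose_two_right, neg_eq_neg_one_mul, mul_pow]
  ring

/-- For every integer `k ≥ 1`,
`∑_{σ,τ ∈ S_k} sgn(σ) sgn(τ) ∏_{i=1}^k 1/(2k + 2 − σ(i) − 2τ(i))!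
 = (−1)^(k(k−1)/2) · 2^(k(k−1)/2) · k! · ∏_{j=0}^{k−1} (2j)!/(k+j)!`,
with the convention `1/n! = 0` for `n < 0`.  Here `σ, τ` are `0`-indexed
permutations of `Fin k`, so the `1`-indexed values `σ(i), τ(i)` become
`σ(i) + 1, τ(i) + 1` and the argument `2k + 2 − σ(i) − 2τ(i)` becomes
`2k − 1 − σ(i) − 2τ(i)`. -/
theorem double_permutation_sum_factorials (k : ℕ) (hk : 1 ≤ k) :
    ∑ σ : Equiv.Perm (Fin k), ∑ τ : Equiv.Perm (Fin k),
      ((Equiv.Perm.sign σ : ℤ) : ℚ) * ((Equiv.Perm.sign τ : ℤ) : ℚ) *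
        ∏ i : Fin k,
          factInv (2 * (k : ℤ) - 1 - ((σ i : ℕ) : ℤ) - 2 * ((τ i : ℕ) : ℤ))
    = (-1) ^ (k * (k - 1) / 2) * 2 ^ (k * (k - 1) / 2) * (k.factorial : ℚ) *
        ∏ j ∈ Finset.range k, ((2 * j).factorial : ℚ) / ((k + j).factorial : ℚ) :=
  double_permutation_sum_factorials_general k
end

section
/- Let k ≥ 1 and let d₁,…,d_k be nonnegative integers with ∑_{i=1}^k d_i = r. Consider the k×k matrix over ℚ whose (i,j) entry (1 ≤ i,j ≤ k) is 1/(2k − i − 2j + 2 − d_i)!, with the convention that 1/n! = 0 when n < 0. If there exists an index u with 1 ≤ u ≤ k − r and d_u ≠ 0, then the determinant of this matrix is zero. -/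
open scoped BigOperators

/-!
Row `i` of the matrix depends on `i` only through `i + d i`, so it suffices to find two rows
with the same value of `i + d i`. The `k - u` rows `i ≥ u` all have `i + d i ≥ u + 1`
(for `i = u` because `d u ≠ 0`). If these values were distinct, their sum would be at least
`∑_{u ≤ i < k} (i + 1)`, forcing `∑ d i ≥ k - u > r`.
-/

open Finset

theorem Finset.sum_Ico_add_card_le_sum (m : ℕ) (s : Finset ℕ) (hs : ∀ x ∈ s, m ≤ x) :
    ∑ i ∈ Ico m (m + #s), i ≤ ∑ x ∈ s, x := by
  induction s using Finset.induction_on_max with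
  | empty => simp
  | insert a s ha ih =>
    have has : a ∉ s := fun h => lt_irrefl a (ha a h)
    have hcard : #s ≤ a - m := by
      simpa using card_le_card (fun x hx => mem_Ico.2 ⟨hs x (mem_insert_of_mem hx), ha x hx⟩ :
        s ⊆ Ico m a)
    have hma : m ≤ a := hs a (mem_insert_self a s)
    rw [card_insert_of_notMem has, sum_insert has, ← add_assoc,
      sum_Ico_succ_top (Nat.le_add_right m _)]
    have := ih fun x hx => hs x (mem_insert_of_mem hx)
    omega

theorem exists_ne_add_eq_add_of_sum_lt (d : ℕ → ℕ) {a b : ℕ} (hda : d a ≠ 0)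
    (hsum : ∑ i ∈ Ico a b, d i < b - a) :
    ∃ i ∈ Ico a b, ∃ j ∈ Ico a b, i ≠ j ∧ i + d i = j + d j := by
  by_contra! hdistinct
  have hinj : Set.InjOn (fun i => i + d i) (Ico a b) := fun i hi j hj h =>
    by_contra fun hij => hdistinct i hi j hj hij h
  set V := (Ico a b).image fun i => i + d i
  have hV : ∀ x ∈ V, a + 1 ≤ x := by
    simp only [V, mem_image, mem_Ico]
    rintro _ ⟨i, ⟨hai, -⟩, rfl⟩
    rcases hai.eq_or_lt with rfl | hai
    · have := Nat.pos_of_ne_zero hda; omega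
    · omega
  have hshift : ∑ i ∈ Ico (a + 1) (a + 1 + #(Ico a b)), i = ∑ i ∈ Ico a b, i + (b - a) := by
    rw [Nat.card_Ico, show a + 1 + (b - a) = b + 1 by omega, ← sum_Ico_add', sum_add_distrib]
    simp
  have hlow := sum_Ico_add_card_le_sum (a + 1) V hV
  rw [card_image_of_injOn hinj, hshift, sum_image hinj, sum_add_distrib] at hlow
  omega

theorem Fin.exists_ne_val_add_eq_val_add {k : ℕ} (d : Fin k → ℕ) (u : Fin k) (hdu : d u ≠ 0)
    (hsum : u + ∑ i, d i < k) : ∃ i j : Fin k, i ≠ j ∧ (i : ℕ) + d i = j + d j := by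
  set e : ℕ → ℕ := fun n => if h : n < k then d ⟨n, h⟩ else 0
  have he : ∀ i : Fin k, e i = d i := fun i => dif_pos i.isLt
  have hsum' : ∑ n ∈ Ico (u : ℕ) k, e n < k - u := by
    have : ∑ n ∈ Ico (u : ℕ) k, e n ≤ ∑ i, d i := by
      simp_rw [← he, Fin.sum_univ_eq_sum_range e, range_eq_Ico]
      exact sum_le_sum_of_subset (Ico_subset_Ico_left (Nat.zero_le _))
    omega
  obtain ⟨i, hi, j, hj, hij, h⟩ := exists_ne_add_eq_add_of_sum_lt e (by rwa [he]) hsum'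
  have hik := (mem_Ico.1 hi).2
  have hjk := (mem_Ico.1 hj).2
  refine ⟨⟨i, hik⟩, ⟨j, hjk⟩, fun h' => hij (Fin.mk.inj h'), ?_⟩
  simpa only [← he] using h

theorem determinant_vanishes_of_early_nonzero_shift_general (k r : ℕ)
    (d : Fin k → ℕ) (hsum : ∑ i : Fin k, d i = r)
    (u : Fin k) (hu : ((u : ℕ) : ℤ) + 1 ≤ (k : ℤ) - (r : ℤ)) (hdu : d u ≠ 0) :
    Matrix.det (Matrix.of fun i j : Fin k =>
      factInv (2 * (k : ℤ) - ((i : ℕ) : ℤ) - 2 * ((j : ℕ) : ℤ) - 1 - (d i : ℤ)))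
    = 0 := by
  obtain ⟨i, i', hne, heq⟩ := Fin.exists_ne_val_add_eq_val_add d u hdu (by omega)
  refine Matrix.det_zero_of_row_eq hne (funext fun j => ?_)
  simp only [Matrix.of_apply]
  congr 1
  omega

/-- Let `k ≥ 1` and let `d₁, …, d_k` be nonnegative integers with
`∑ d_i = r`.  Consider the `k × k` matrix over `ℚ` whose `(i,j)` entry
(`1 ≤ i, j ≤ k`) is `1/(2k − i − 2j + 2 − d_i)!`, where `1/n! = 0` for `n < 0`.
If there is an index `u` with `1 ≤ u ≤ k − r` and `d_u ≠ 0`, then the determinant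
of this matrix is zero.  (Indices are `0`-indexed via `Fin k`, so the `1`-indexed
`i, j, u` correspond to `i + 1, j + 1, u + 1`.) -/
theorem determinant_vanishes_of_early_nonzero_shift (k r : ℕ) (hk : 1 ≤ k)
    (d : Fin k → ℕ) (hsum : ∑ i : Fin k, d i = r)
    (u : Fin k) (hu : ((u : ℕ) : ℤ) + 1 ≤ (k : ℤ) - (r : ℤ)) (hdu : d u ≠ 0) :
    Matrix.det (Matrix.of fun i j : Fin k =>
      factInv (2 * (k : ℤ) - ((i : ℕ) : ℤ) - 2 * ((j : ℕ) : ℤ) - 1 - (d i : ℤ)))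
    = 0 :=
  determinant_vanishes_of_early_nonzero_shift_general k r d hsum u hu hdu
end

section
/- Let α be a partition and let k be an integer with k ≥ max(l(α) + 1, α₁); extend α by zeros. Then the determinant of the k×k matrix whose (i,j) entry (1 ≤ i,j ≤ k) is C(2k − i − 1 − α_{k−i+1}, 2k − 2j) equals the determinant of the (k−1)×(k−1) matrix whose (i,j) entry (1 ≤ i,j ≤ k−1) is C(2(k−1) − i − α_{(k−1)−i+1}, 2(k−1) − 2j). That is, E_α(k) = D_α(k−1). -/
/-! Since `α_k = 0` (as `k > l(α)`), the first column of the matrix of `E_α(k)` is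
`(C(2k - 2, 2k - 2), C(2k - 3, 2k - 2), …) = (1, 0, …, 0)`. Expanding along it leaves the
minor obtained by deleting the first row and column, whose entries are
`C(2k - (i + 1) - 1 - α_{k - i}, 2k - 2(j + 1)) = C(2(k - 1) - i - α_{k - i}, 2(k - 1) - 2j)`,
i.e. exactly the matrix of `D_α(k - 1)`. -/

open scoped BigOperators

/-- The integer-argument binomial coefficient `C(n, r)` for `n : ℤ`, `r : ℕ`:
it equals the usual binomial coefficient when `n ≥ 0`, and is `0` when `n < 0`
(consistent with the convention that `C(n, r) = 0` whenever `r > n`). -/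
def zchoose (n : ℤ) (r : ℕ) : ℚ :=
  if 0 ≤ n then (n.toNat.choose r : ℚ) else 0

theorem zchoose_eq_zero_of_lt {n : ℤ} {r : ℕ} (h : n < r) : zchoose n r = 0 := by
  unfold zchoose
  split_ifs
  · rw [Nat.choose_eq_zero_of_lt (by omega), Nat.cast_zero]
  · rfl

theorem zchoose_eq_one_of_eq {n : ℤ} {r : ℕ} (h : n = r) : zchoose n r = 1 := by
  simp [zchoose, h]

theorem Matrix.det_succ_eq_mul_det_submatrix_of_col_zero {R : Type*} [CommRing R] {n : ℕ}
    (A : Matrix (Fin (n + 1)) (Fin (n + 1)) R) (hA : ∀ i : Fin n, A i.succ 0 = 0) :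
    A.det = A 0 0 * (A.submatrix Fin.succ Fin.succ).det := by
  rw [Matrix.det_succ_column_zero, Fin.sum_univ_succ]
  simp [hA]

theorem E_alpha_eq_D_alpha_pred_general (m k : ℕ) (alpha : ℕ → ℕ)
    (hzero : ∀ i, m ≤ i → alpha i = 0)
    (hk : max (m + 1) (alpha 0) ≤ k) :
    Matrix.det (Matrix.of fun i j : Fin k =>
      zchoose (2 * (k : ℤ) - (((i : ℕ) : ℤ) + 1) - 1 - (alpha (k - 1 - (i : ℕ)) : ℤ))
        (2 * k - 2 * ((j : ℕ) + 1)))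
    = Matrix.det (Matrix.of fun i j : Fin (k - 1) =>
        zchoose (2 * ((k : ℤ) - 1) - (((i : ℕ) : ℤ) + 1) - (alpha (k - 2 - (i : ℕ)) : ℤ))
          (2 * (k - 1) - 2 * ((j : ℕ) + 1))) := by
  obtain ⟨n, rfl⟩ : ∃ n, k = n + 1 := ⟨k - 1, by omega⟩
  have hαn : alpha n = 0 := hzero n (by omega)
  rw [Matrix.det_succ_eq_mul_det_submatrix_of_col_zero]
  · rw [Matrix.of_apply, zchoose_eq_one_of_eq (by simp [hαn]; omega), one_mul]
    congr 1
    ext i j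
    simp only [Matrix.submatrix_apply, Matrix.of_apply, Fin.val_succ]
    congr 1
    · rw [show n + 1 - 1 - (i + 1 : ℕ) = n + 1 - 2 - i by omega]
      push_cast
      ring
    · omega
  · intro i
    apply zchoose_eq_zero_of_lt
    simp only [Fin.val_succ, Fin.val_zero]
    push_cast
    omega

/-- Let `alpha` be a partition of length `m` (0-indexed), extended by
zeros, and let `k ≥ max(l(α) + 1, α₁)`.  Then the determinant of the `k × k` matrix
with `(i,j)` entry `C(2k − i − 1 − α_{k−i+1}, 2k − 2j)` (for `1 ≤ i, j ≤ k`) equals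
the determinant of the `(k−1) × (k−1)` matrix with `(i,j)` entry
`C(2(k−1) − i − α_{(k−1)−i+1}, 2(k−1) − 2j)` (for `1 ≤ i, j ≤ k−1`);
that is, `E_α(k) = D_α(k−1)`. -/
theorem E_alpha_eq_D_alpha_pred (m k : ℕ) (alpha : ℕ → ℕ)
    (hanti : ∀ i j, i ≤ j → alpha j ≤ alpha i)
    (hpos : ∀ i, i < m → 0 < alpha i)
    (hzero : ∀ i, m ≤ i → alpha i = 0)
    (hk : max (m + 1) (alpha 0) ≤ k) :
    Matrix.det (Matrix.of fun i j : Fin k =>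
      zchoose (2 * (k : ℤ) - (((i : ℕ) : ℤ) + 1) - 1 - (alpha (k - 1 - (i : ℕ)) : ℤ))
        (2 * k - 2 * ((j : ℕ) + 1)))
    = Matrix.det (Matrix.of fun i j : Fin (k - 1) =>
        zchoose (2 * ((k : ℤ) - 1) - (((i : ℕ) : ℤ) + 1) - (alpha (k - 2 - (i : ℕ)) : ℤ))
          (2 * (k - 1) - 2 * ((j : ℕ) + 1))) :=
  E_alpha_eq_D_alpha_pred_general m k alpha hzero hk
end

section
/- Let λ be a partition with length m = l(λ). Then the coefficient of the monomial y₁^{λ₁+m−1} y₂^{λ₂+m−2} ⋯ y_m^{λ_m} (i.e., the exponent of y_i is λ_i + m − i) in the formal power series ∏_{1≤i<j≤m} (y_i − y_j) · exp(y₁ + ⋯ + y_m) over ℚ equals (∏_{1≤i<j≤m} (λ_i − λ_j − i + j)) / (∏_{1≤i≤m} (λ_i + m − i)!). Equivalently, ∑_{σ∈S_m} sgn(σ) ∏_{i=1}^m 1/(λ_i − i + σ(i))! = (∏_{1≤i<j≤m} (λ_i − λ_j − i + j)) / (∏_{1≤i≤m} (λ_i + m − i)!), with the convention 1/n! = 0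 for n < 0. -/
open scoped BigOperators

/-!
The sum is the determinant of `(1/(λᵢ - i + j)!)ᵢⱼ`. With `ℓᵢ = λᵢ + m - 1 - i` the entry is
`1/(ℓᵢ - (m - 1 - j))! = ℓᵢ^{\underline{m-1-j}} / ℓᵢ!`, also when the argument is negative, since the
falling factorial then vanishes. Pulling `1/ℓᵢ!` out of row `i` leaves the matrix of the monic
polynomials `X^{\underline{m-1-j}}` evaluated at the `ℓᵢ`, whose determinant is that of the
Vandermonde matrix with reversed columns, `∏_{i<j} (ℓᵢ - ℓⱼ)`.
-/

open Finset Polynomial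

theorem Matrix.det_of_eq_sum_sign_mul_prod {n R : Type*} [DecidableEq n] [Fintype n]
    [CommRing R] (f : n → n → R) :
    (Matrix.of f).det = ∑ σ : Equiv.Perm n, ((Equiv.Perm.sign σ : ℤ) : R) * ∏ i, f i (σ i) := by
  rw [← Matrix.det_transpose, Matrix.det_apply']
  rfl

theorem Matrix.det_of_eval_rev_eq_prod_sub {R : Type*} [CommRing R] {n : ℕ} (x : Fin n → R)
    (p : ℕ → R[X]) (h_deg : ∀ k, (p k).natDegree = k) (h_monic : ∀ k, (p k).Monic) :
    (Matrix.of fun i j : Fin n => (p j.rev).eval (x i)).det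
      = ∏ i : Fin n, ∏ j ∈ Ioi i, (x i - x j) := by
  have h_vandermonde := Matrix.det_eval_matrixOfPolynomials_eq_det_vandermonde x (fun j => p j)
    (fun j => h_deg j) (fun j => h_monic j)
  calc (Matrix.of fun i j : Fin n => (p j.rev).eval (x i)).det
      = ((Matrix.of fun i j : Fin n => (p j).eval (x i)).submatrix id Fin.revPerm).det := rfl
    _ = ((Matrix.vandermonde x).submatrix id Fin.revPerm).det := by
      rw [Matrix.det_permute', Matrix.det_permute', h_vandermonde]
    _ = (Matrix.projVandermonde 1 x).det := by
      congr 1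
      ext i j
      simp [Matrix.projVandermonde_apply]
    _ = ∏ i : Fin n, ∏ j ∈ Ioi i, (x i - x j) := by
      simp [Matrix.det_projVandermonde]

theorem factInv_natCast_sub (L r : ℕ) :
    factInv ((L : ℤ) - r) = (descPochhammer ℚ r).eval (L : ℚ) / L.factorial := by
  rw [descPochhammer_eval_eq_descFactorial, factInv]
  rcases le_or_gt r L with h | h
  · rw [if_pos (by omega), show ((L : ℤ) - r).toNat = L - r by omega,
      ← Nat.factorial_mul_descFactorial h]
    have := Nat.descFactorial_pos.mpr h
    push_cast
    field_simp
  · rw [if_neg (by omega), Nat.descFactorial_of_lt h, Nat.cast_zero, zero_div]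

theorem leading_coefficient_of_P_lambda_general (m : ℕ) (lam : ℕ → ℕ) :
    ∑ σ : Equiv.Perm (Fin m),
      ((Equiv.Perm.sign σ : ℤ) : ℚ) *
        ∏ i : Fin m, factInv ((lam i : ℤ) - ((i : ℕ) : ℤ) + ((σ i : ℕ) : ℤ))
    = (∏ i : Fin m, ∏ j ∈ Finset.Ioi i,
        ((lam i : ℚ) - (lam j : ℚ) - ((i : ℕ) : ℚ) + ((j : ℕ) : ℚ))) /
      (∏ i : Fin m, ((lam i + (m - 1 - (i : ℕ))).factorial : ℚ)) := by
  set ℓ : Fin m → ℕ := fun i => lam i + (m - 1 - (i : ℕ))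
  have h_entry (i j : Fin m) : factInv ((lam i : ℤ) - ((i : ℕ) : ℤ) + ((j : ℕ) : ℤ))
      = ((ℓ i).factorial : ℚ)⁻¹ * (descPochhammer ℚ j.rev).eval (ℓ i : ℚ) := by
    rw [show (lam i : ℤ) - ((i : ℕ) : ℤ) + ((j : ℕ) : ℤ) = (ℓ i : ℤ) - (j.rev : ℕ) by
      simp only [ℓ, Fin.val_rev]; omega, factInv_natCast_sub, div_eq_inv_mul]
  have h_diff (i j : Fin m) : ((lam i : ℚ) - (lam j : ℚ) - ((i : ℕ) : ℚ) + ((j : ℕ) : ℚ))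
      = (ℓ i : ℚ) - ℓ j := by
    have := i.isLt
    have := j.isLt
    simp only [ℓ]
    push_cast [Nat.sub_sub, Nat.cast_sub (by omega : 1 + (i : ℕ) ≤ m),
      Nat.cast_sub (by omega : 1 + (j : ℕ) ≤ m)]
    ring
  have h_det := Matrix.det_mul_column (fun i => ((ℓ i).factorial : ℚ)⁻¹)
    (Matrix.of fun i j : Fin m => (descPochhammer ℚ j.rev).eval (ℓ i : ℚ))
  rw [Matrix.det_of_eval_rev_eq_prod_sub _ _ (fun k => descPochhammer_natDegree ℚ k)
    (fun k => monic_descPochhammer ℚ k)] at h_det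
  simp only [Matrix.of_apply, Matrix.det_of_eq_sum_sign_mul_prod] at h_det
  simp_rw [h_entry, h_det, h_diff, prod_inv_distrib,
    div_eq_inv_mul]
  rfl

/-- Let `lam` be a partition of length `m` (0-indexed).  Then the
coefficient of the monomial `y₁^(λ₁+m−1) ⋯ y_m^(λ_m)` in
`∏_{1≤i<j≤m} (y_i − y_j) · exp(y₁ + ⋯ + y_m)` equals
`(∏_{1≤i<j≤m} (λ_i − λ_j − i + j)) / (∏_{1≤i≤m} (λ_i + m − i)!)`; equivalently,
`∑_{σ ∈ S_m} sgn(σ) ∏_{i=1}^m 1/(λ_i − i + σ(i))!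
  = (∏_{1≤i<j≤m} (λ_i − λ_j − i + j)) / (∏_{1≤i≤m} (λ_i + m − i)!)`,
with the convention `1/n! = 0` for `n < 0`.  (With `0`-indexed `i` and `σ`, the
argument `λ_i − i + σ(i)` becomes `λ_i − i + σ(i)` again, since the shifts cancel.) -/
theorem leading_coefficient_of_P_lambda (m : ℕ) (lam : ℕ → ℕ)
    (hanti : ∀ i j, i ≤ j → lam j ≤ lam i)
    (hpos : ∀ i, i < m → 0 < lam i)
    (hzero : ∀ i, m ≤ i → lam i = 0) :
    ∑ σ : Equiv.Perm (Fin m),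
      ((Equiv.Perm.sign σ : ℤ) : ℚ) *
        ∏ i : Fin m, factInv ((lam i : ℤ) - ((i : ℕ) : ℤ) + ((σ i : ℕ) : ℤ))
    = (∏ i : Fin m, ∏ j ∈ Finset.Ioi i,
        ((lam i : ℚ) - (lam j : ℚ) - ((i : ℕ) : ℚ) + ((j : ℕ) : ℚ))) /
      (∏ i : Fin m, ((lam i + (m - 1 - (i : ℕ))).factorial : ℚ)) :=
  leading_coefficient_of_P_lambda_general m lam
end
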